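/- arXiv:2008.10242 — 5 statements merged into one kernel-verified Lean document; each statement's English description precedes it below -/
import Mathlib

section
/- Let θ₁, θ₂ > 0, ε₁⁺ > ε₁⁻ ≥ 0, ε₂⁺ > ε₂⁻ ≥ 0, all in [0,1]. There exist positive reals ρ₁, ρ₂ such that for all x ∈ [0,1], ρ₁/ρ₂ = [θ₁((ε₁⁺−ε₁⁻)x + ε₁⁻)] / [θ₂((ε₂⁺−ε₂⁻)x + ε₂⁻)] if and only if ε₁⁺·ε₂⁻ = ε₂⁺·ε₁⁻. -/
/-- Positive inverse propensities `ρ₁, ρ₂` whose ratio matches the ratio of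
trust-biased click probabilities at ranks 1 and 2 uniformly in the unknown relevance
`x ∈ [0,1]` exist iff `ε₁⁺·ε₂⁻ = ε₂⁺·ε₁⁻`.  (The ratio identity is written
cross-multiplied to avoid division.) -/
theorem ips_ratio_exists_iff (θ₁ θ₂ e1p e1m e2p e2m : ℝ)
    (hθ₁ : 0 < θ₁) (hθ₂ : 0 < θ₂) (hθ₁' : θ₁ ≤ 1) (hθ₂' : θ₂ ≤ 1)
    (h1m : 0 ≤ e1m) (h1 : e1m < e1p) (h1p : e1p ≤ 1)
    (h2m : 0 ≤ e2m) (h2 : e2m < e2p) (h2p : e2p ≤ 1) :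
    (∃ ρ₁ ρ₂ : ℝ, 0 < ρ₁ ∧ 0 < ρ₂ ∧
      ∀ x ∈ Set.Icc (0 : ℝ) 1,
        ρ₁ * (θ₂ * ((e2p - e2m) * x + e2m)) = ρ₂ * (θ₁ * ((e1p - e1m) * x + e1m)))
    ↔ e1p * e2m = e2p * e1m := by
  constructor
  · rintro ⟨ρ₁, ρ₂, hρ₁, hρ₂, h⟩
    have h0 := h 0 ⟨le_refl 0, zero_le_one⟩
    have h1' := h 1 ⟨zero_le_one, le_refl 1⟩
    have key : ρ₂ * θ₁ * (e1p * e2m - e2p * e1m) = 0 := by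
      linear_combination e2p * h0 - e2m * h1'
    have hpos : (0:ℝ) < ρ₂ * θ₁ := by positivity
    rcases mul_eq_zero.mp key with h' | h'
    · exact absurd h' (ne_of_gt hpos)
    · linarith
  · intro hE
    have he1p : 0 < e1p := lt_of_le_of_lt h1m h1
    have he2p : 0 < e2p := lt_of_le_of_lt h2m h2
    refine ⟨θ₁ * e1p, θ₂ * e2p, by positivity, by positivity, ?_⟩
    intro x hx
    linear_combination θ₁ * θ₂ * (1 - x) * hE
end

section
/- Suppose θ₁, θ₂ > 0, 0 ≤ ε₁⁻ < ε₁⁺ ≤ 1, 0 ≤ ε₂⁻ < ε₂⁺ ≤ 1. If there exist ρ₁, ρ₂ > 0 such that for all γ₁, γ₂ ∈ [0,1]: γ₁ > γ₂ ↔ [θ₁((ε₁⁺−ε₁⁻)γ₁ + ε₁⁻)]/ρ₁ > [θ₂((ε₂⁺−ε₂⁻)γ₂ + ε₂⁻)]/ρ₂, then ε₁⁺·ε₂⁻ = ε₂⁺·ε₁⁻. -/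
/-- Theorem 1 of the paper, two-document case: if some positive
propensities make the expected IPS estimates order-consistent with the true relevances
for all `γ₁, γ₂ ∈ [0,1]`, then the trust-bias parameters are degenerate:
`ε₁⁺·ε₂⁻ = ε₂⁺·ε₁⁻`. -/
theorem no_unbiased_ips (θ₁ θ₂ e1p e1m e2p e2m : ℝ)
    (hθ₁ : 0 < θ₁) (hθ₂ : 0 < θ₂)
    (h1m : 0 ≤ e1m) (h1 : e1m < e1p) (h1p : e1p ≤ 1)
    (h2m : 0 ≤ e2m) (h2 : e2m < e2p) (h2p : e2p ≤ 1)
    (h : ∃ ρ₁ ρ₂ : ℝ, 0 < ρ₁ ∧ 0 < ρ₂ ∧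
      ∀ γ₁ ∈ Set.Icc (0 : ℝ) 1, ∀ γ₂ ∈ Set.Icc (0 : ℝ) 1,
        (γ₂ < γ₁ ↔
          θ₂ * ((e2p - e2m) * γ₂ + e2m) / ρ₂ < θ₁ * ((e1p - e1m) * γ₁ + e1m) / ρ₁)) :
    e1p * e2m = e2p * e1m := by
  obtain ⟨ρ₁, ρ₂, hρ₁, hρ₂, H⟩ := h
  have h01 : (0:ℝ) ∈ Set.Icc (0:ℝ) 1 := ⟨le_refl 0, zero_le_one⟩
  have h11 : (1:ℝ) ∈ Set.Icc (0:ℝ) 1 := ⟨zero_le_one, le_refl 1⟩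
  have hρ₁' : ρ₁ ≠ 0 := ne_of_gt hρ₁
  have hρ₂' : ρ₂ ≠ 0 := ne_of_gt hρ₂
  -- slopes
  have ha : 0 < θ₁ * (e1p - e1m) / ρ₁ :=
    div_pos (mul_pos hθ₁ (sub_pos.mpr h1)) hρ₁
  have hc : 0 < θ₂ * (e2p - e2m) / ρ₂ :=
    div_pos (mul_pos hθ₂ (sub_pos.mpr h2)) hρ₂
  set a := θ₁ * (e1p - e1m) / ρ₁ with ha_def
  set c := θ₂ * (e2p - e2m) / ρ₂ with hc_def
  -- diagonal inequalities : f₁ ≤ f₂ at 0 and 1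
  have hbd : θ₁ * e1m / ρ₁ ≤ θ₂ * e2m / ρ₂ := by
    by_contra hcon
    push_neg at hcon
    have := (H 0 h01 0 h01).mpr (by
      have : θ₂ * ((e2p - e2m) * 0 + e2m) / ρ₂ = θ₂ * e2m / ρ₂ := by ring_nf
      rw [this]
      have : θ₁ * ((e1p - e1m) * 0 + e1m) / ρ₁ = θ₁ * e1m / ρ₁ := by ring_nf
      rw [this]
      exact hcon)
    exact lt_irrefl 0 this
  have hbd1 : θ₁ * e1p / ρ₁ ≤ θ₂ * e2p / ρ₂ := by
    by_contra hcon
    push_neg at hcon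
    have := (H 1 h11 1 h11).mpr (by
      have h1' : θ₂ * ((e2p - e2m) * 1 + e2m) / ρ₂ = θ₂ * e2p / ρ₂ := by ring_nf
      have h2' : θ₁ * ((e1p - e1m) * 1 + e1m) / ρ₁ = θ₁ * e1p / ρ₁ := by ring_nf
      rw [h1', h2']
      exact hcon)
    exact lt_irrefl 1 this
  -- reverse inequality at 0 : f₂(0) ≤ f₁(0)
  have hdb : θ₂ * e2m / ρ₂ ≤ θ₁ * e1m / ρ₁ := by
    by_contra hcon
    push_neg at hcon
    set ε := θ₂ * e2m / ρ₂ - θ₁ * e1m / ρ₁ with hε_def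
    have hε : 0 < ε := sub_pos.mpr hcon
    set γ := min 1 (ε / (2 * a)) with hγ_def
    have hγpos : 0 < γ := lt_min one_pos (div_pos hε (by positivity))
    have hγmem : γ ∈ Set.Icc (0:ℝ) 1 := ⟨hγpos.le, min_le_left _ _⟩
    have hlt := (H γ hγmem 0 h01).mp hγpos
    have key : θ₁ * ((e1p - e1m) * γ + e1m) / ρ₁ = a * γ + θ₁ * e1m / ρ₁ := by
      rw [ha_def]; field_simp
    have hγle : γ ≤ ε / (2 * a) := min_le_right _ _
    have haγ : a * γ ≤ ε / 2 := by
      have := mul_le_mul_of_nonneg_left hγle ha.le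
      have h2a : a * (ε / (2 * a)) = ε / 2 := by
        field_simp
      linarith [this, h2a ▸ this]
    have hsimp : θ₂ * ((e2p - e2m) * 0 + e2m) / ρ₂ = θ₂ * e2m / ρ₂ := by ring_nf
    rw [hsimp, key] at hlt
    linarith
  -- reverse inequality at 1 : f₂(1) ≤ f₁(1)
  have hdb1 : θ₂ * e2p / ρ₂ ≤ θ₁ * e1p / ρ₁ := by
    by_contra hcon
    push_neg at hcon
    set ε := θ₂ * e2p / ρ₂ - θ₁ * e1p / ρ₁ with hε_def
    have hε : 0 < ε := sub_pos.mpr hcon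
    set δ := min 1 (ε / (2 * c)) with hδ_def
    have hδpos : 0 < δ := lt_min one_pos (div_pos hε (by positivity))
    have hδle1 : δ ≤ 1 := min_le_left _ _
    have hγmem : 1 - δ ∈ Set.Icc (0:ℝ) 1 := ⟨by linarith, by linarith⟩
    have hlt := (H 1 h11 (1 - δ) hγmem).mp (by linarith)
    have key : θ₂ * ((e2p - e2m) * (1 - δ) + e2m) / ρ₂ = θ₂ * e2p / ρ₂ - c * δ := by
      rw [hc_def]; field_simp; ring
    have hδle : δ ≤ ε / (2 * c) := min_le_right _ _
    have hcδ : c * δ ≤ ε / 2 := by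
      have := mul_le_mul_of_nonneg_left hδle hc.le
      have h2c : c * (ε / (2 * c)) = ε / 2 := by field_simp
      linarith [h2c ▸ this]
    have hsimp : θ₁ * ((e1p - e1m) * 1 + e1m) / ρ₁ = θ₁ * e1p / ρ₁ := by ring_nf
    rw [hsimp, key] at hlt
    linarith
  -- equalities
  have e0 : θ₁ * e1m * ρ₂ = θ₂ * e2m * ρ₁ := by
    have := le_antisymm hbd hdb
    field_simp at this
    linarith
  have e1 : θ₁ * e1p * ρ₂ = θ₂ * e2p * ρ₁ := by
    have := le_antisymm hbd1 hdb1
    field_simp at this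
    linarith
  -- conclude
  have key : θ₂ * ρ₁ * (e2m * e1p) = θ₂ * ρ₁ * (e2p * e1m) := by
    linear_combination e1m * e1 - e1p * e0
  have hpos : θ₂ * ρ₁ ≠ 0 := ne_of_gt (mul_pos hθ₂ hρ₁)
  have := mul_left_cancel₀ hpos key
  linarith [this]
end

section
/- Suppose trust bias is absent: εₖ⁺ = ε⁺ and εₖ⁻ = ε⁻ for all ranks k, with ε⁺ > ε⁻ ≥ 0 and θₖ > 0 for all k. Suppose further that for every query q and all rankers f, f', Σ_{d∈D_q} λ(d|q,f) = Σ_{d∈D_q} λ(d|q,f'). Then the affine estimate equals (1/(ε⁺−ε⁻)) times the IPS estimate minus a constant ℂ independent of f: Δ̂_affine(f) = (1/(ε⁺−ε⁻))·Δ̂_IPS(f) − ℂ, where ℂ = (1/N)·(ε⁻/(ε⁺−ε⁻))·Σᵢ Σ_{(d,k)∈yᵢ} λ(d|qᵢ,f). -/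
open Finset

/-- with no trust bias (`ε⁺, ε⁻` constant across ranks, `ε⁺ > ε⁻ ≥ 0`,
`θ k > 0`), and with rank-sum `Σ_{(d,k)∈yᵢ} λ(d|qᵢ,f)` independent of the ranker,
the affine estimate equals `(1/(ε⁺−ε⁻))` times the IPS estimate minus the constant
`ℂ = (1/N)·(ε⁻/(ε⁺−ε⁻))·Σᵢ Σ_{(d,k)∈yᵢ} λ(d|qᵢ,f)`. -/
theorem affine_reduces_to_ips {F D : Type} (N : ℕ) (hN : 0 < N)
    (y : Fin N → Finset (D × ℕ)) (c : Fin N → D → ℝ)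
    (hc : ∀ i d, c i d = 0 ∨ c i d = 1)
    (θ : ℕ → ℝ) (hθ : ∀ k, 0 < θ k)
    (ep em : ℝ) (hem : 0 ≤ em) (hpe : em < ep)
    (lam : F → Fin N → D → ℝ)
    (hlam : ∀ f f' : F, ∀ i : Fin N,
      ∑ p ∈ y i, lam f i p.1 = ∑ p ∈ y i, lam f' i p.1) :
    ∀ f : F,
      (1 / (N : ℝ)) * ∑ i, ∑ p ∈ y i,
          (c i p.1 - θ p.2 * em) / (θ p.2 * (ep - em)) * lam f i p.1
      = (1 / (ep - em)) *
          ((1 / (N : ℝ)) * ∑ i, ∑ p ∈ y i, c i p.1 / θ p.2 * lam f i p.1)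
        - (1 / (N : ℝ)) * (em / (ep - em)) * ∑ i, ∑ p ∈ y i, lam f i p.1 := by
  intro f
  have hd : ep - em ≠ 0 := sub_ne_zero.mpr (ne_of_gt hpe)
  have h2 : ∑ i, ∑ p ∈ y i,
      (c i p.1 - θ p.2 * em) / (θ p.2 * (ep - em)) * lam f i p.1
    = ∑ i, ∑ p ∈ y i, (1 / (ep - em) * (c i p.1 / θ p.2 * lam f i p.1)
        - em / (ep - em) * lam f i p.1) := by
    refine Finset.sum_congr rfl fun i _ => Finset.sum_congr rfl fun p _ => ?_
    have hθp : θ p.2 ≠ 0 := ne_of_gt (hθ p.2)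
    field_simp
  rw [h2]
  simp only [Finset.sum_sub_distrib, ← Finset.mul_sum]
  ring
end

section
/- Under the hypotheses of the no-trust-bias reduction (εₖ⁺ = ε⁺ > ε⁻ = εₖ⁻ for all k, θₖ > 0, and Σ_{d∈D_q} λ(d|q,f) independent of f), for all rankers f, f': Δ̂_affine(f) > Δ̂_affine(f') if and only if Δ̂_IPS(f) > Δ̂_IPS(f'). -/
open Finset

/-- under the no-trust-bias reduction hypotheses, the affine estimator and
the IPS estimator order any two rankers `f, f'` identically. -/
theorem affine_ips_same_order {F D : Type} (N : ℕ) (hN : 0 < N)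
    (y : Fin N → Finset (D × ℕ)) (c : Fin N → D → ℝ)
    (hc : ∀ i d, c i d = 0 ∨ c i d = 1)
    (θ : ℕ → ℝ) (hθ : ∀ k, 0 < θ k)
    (ep em : ℝ) (hem : 0 ≤ em) (hpe : em < ep)
    (lam : F → Fin N → D → ℝ)
    (hlam : ∀ f f' : F, ∀ i : Fin N,
      ∑ p ∈ y i, lam f i p.1 = ∑ p ∈ y i, lam f' i p.1) :
    ∀ f f' : F,
      ((1 / (N : ℝ)) * ∑ i, ∑ p ∈ y i,
          (c i p.1 - θ p.2 * em) / (θ p.2 * (ep - em)) * lam f' i p.1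
        < (1 / (N : ℝ)) * ∑ i, ∑ p ∈ y i,
          (c i p.1 - θ p.2 * em) / (θ p.2 * (ep - em)) * lam f i p.1)
      ↔ ((1 / (N : ℝ)) * ∑ i, ∑ p ∈ y i, c i p.1 / θ p.2 * lam f' i p.1
        < (1 / (N : ℝ)) * ∑ i, ∑ p ∈ y i, c i p.1 / θ p.2 * lam f i p.1) := by
  intro f f'
  have hd : ep - em > 0 := by linarith
  have hNpos : (0:ℝ) < 1 / N := by positivity
  -- rewrite affine sums
  have key : ∀ g : F, ∑ i, ∑ p ∈ y i,
      (c i p.1 - θ p.2 * em) / (θ p.2 * (ep - em)) * lam g i p.1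
      = (1 / (ep - em)) * (∑ i, ∑ p ∈ y i, c i p.1 / θ p.2 * lam g i p.1)
        - (em / (ep - em)) * (∑ i, ∑ p ∈ y i, lam g i p.1) := by
    intro g
    rw [mul_sum, mul_sum, ← sum_sub_distrib]
    refine sum_congr rfl fun i _ => ?_
    rw [mul_sum, mul_sum, ← sum_sub_distrib]
    refine sum_congr rfl fun p _ => ?_
    have hθp := (hθ p.2).ne'
    field_simp
  have hL : ∑ i, ∑ p ∈ y i, lam f i p.1 = ∑ i, ∑ p ∈ y i, lam f' i p.1 :=
    sum_congr rfl fun i _ => hlam f f' i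
  rw [key f, key f', hL]
  constructor <;> intro h
  · have h' := lt_of_mul_lt_mul_left h (le_of_lt hNpos)
    have := sub_lt_sub_iff_right ((em / (ep - em)) * (∑ i, ∑ p ∈ y i, lam f' i p.1)) |>.mp h'
    have := lt_of_mul_lt_mul_left this (by positivity : (0:ℝ) ≤ 1 / (ep - em))
    exact mul_lt_mul_of_pos_left this hNpos
  · have h' := lt_of_mul_lt_mul_left h (le_of_lt hNpos)
    have h2 : (1 / (ep - em)) * (∑ i, ∑ p ∈ y i, c i p.1 / θ p.2 * lam f' i p.1)
        < (1 / (ep - em)) * (∑ i, ∑ p ∈ y i, c i p.1 / θ p.2 * lam f i p.1) :=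
      mul_lt_mul_of_pos_left h' (by positivity)
    have := sub_lt_sub_right h2 ((em / (ep - em)) * (∑ i, ∑ p ∈ y i, lam f' i p.1))
    exact mul_lt_mul_of_pos_left this hNpos
end

section
/- For the Bayes-IPS estimator with weights wₖ = εₖ⁺/((εₖ⁺+εₖ⁻)·θₖ) applied to trust-biased clicks with probability θₖ((εₖ⁺−εₖ⁻)γ + εₖ⁻), the expected per-impression estimate equals (εₖ⁺(εₖ⁺−εₖ⁻)/(εₖ⁺+εₖ⁻))·γ + εₖ⁺εₖ⁻/(εₖ⁺+εₖ⁻). In particular it differs from γ for some γ ∈ [0,1] whenever εₖ⁻ > 0 and εₖ⁺ + εₖ⁻ > 0. -/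
/-- the expected per-impression Bayes-IPS estimate, with weight
`w = ε⁺/((ε⁺+ε⁻)·θ)` applied to a click of probability `θ((ε⁺−ε⁻)γ + ε⁻)`, equals
`(ε⁺(ε⁺−ε⁻)/(ε⁺+ε⁻))·γ + ε⁺ε⁻/(ε⁺+ε⁻)`; and it differs from `γ` for some `γ ∈ [0,1]`
whenever `ε⁻ > 0` and `ε⁺ + ε⁻ > 0`. -/
theorem bayes_ips_expected_value (θ ep em : ℝ)
    (hθ : 0 < θ) (hep0 : 0 ≤ ep) (hep1 : ep ≤ 1) (hem0 : 0 ≤ em) (hem1 : em ≤ 1) :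
    (∀ γ : ℝ,
      ep / ((ep + em) * θ) * (θ * ((ep - em) * γ + em))
        = ep * (ep - em) / (ep + em) * γ + ep * em / (ep + em)) ∧
    (0 < em → 0 < ep + em →
      ∃ γ ∈ Set.Icc (0 : ℝ) 1,
        ep / ((ep + em) * θ) * (θ * ((ep - em) * γ + em)) ≠ γ) := by
  have hmain : ∀ γ : ℝ,
      ep / ((ep + em) * θ) * (θ * ((ep - em) * γ + em))
        = ep * (ep - em) / (ep + em) * γ + ep * em / (ep + em) := by
    intro γ
    rcases eq_or_ne (ep + em) 0 with h | h
    · have he : ep = 0 := by nlinarith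
      simp [h, he]
    · field_simp
  refine ⟨hmain, fun hem hsum => ?_⟩
  rcases eq_or_lt_of_le hep0 with h0 | h0
  · refine ⟨1, by norm_num, ?_⟩
    rw [hmain 1, ← h0]
    norm_num
  · refine ⟨0, by norm_num, ?_⟩
    rw [hmain 0]
    have : 0 < ep * em / (ep + em) := div_pos (mul_pos h0 hem) hsum
    simp only [mul_zero, zero_add]
    linarith
end
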